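/- arXiv:2004.03881 — 4 statements merged into one kernel-verified Lean document; each statement's English description precedes it below -/
import Mathlib

section
/- Let f : [a,b] → ℝ be C^{k+1} and suppose f(x₀) = 0 for some x₀ ∈ [a,b]. Then for all x ∈ [a,b], the k-th derivative of the function x ↦ f(x)/(x - x₀) (extended appropriately at x₀) equals (1/(x-x₀)^{k+1}) · ∫_{x₀}^{x} (t - x₀)^k f^{(k+1)}(t) dt. -/
open Set intervalIntegral MeasureTheory Filter Topology
open scoped Interval ContDiff

/-!
With `I_k g (x) = ∫_{x₀}^x (t - x₀)^k g(t) dt` (`momentIntegral x₀ k g x`), induct on `k`. For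
`k = 0` the claim is the fundamental theorem of calculus together with `f x₀ = 0`. Off `x₀` the
quotient rule gives
`(I_k g / (· - x₀)^(k+1))' = ((x - x₀)^(k+1) g(x) - (k+1) I_k g (x)) / (x - x₀)^(k+2)`,
and for `g = f^(k+1)` integration by parts identifies the numerator with `I_(k+1) f^(k+2) (x)`.
-/

noncomputable def momentIntegral (x₀ : ℝ) (k : ℕ) (g : ℝ → ℝ) (x : ℝ) : ℝ :=
  ∫ t in x₀..x, (t - x₀) ^ k * g t

theorem hasDerivWithinAt_sub_pow_succ (x₀ : ℝ) (k : ℕ) (s : Set ℝ) (y : ℝ) :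
    HasDerivWithinAt (fun y ↦ (y - x₀) ^ (k + 1)) ((k + 1) * (y - x₀) ^ k) s y := by
  simpa using ((hasDerivWithinAt_id y s).sub_const x₀).fun_pow (k + 1)

section Interval

variable {g g' : ℝ → ℝ} {x₀ x : ℝ}

theorem integral_eq_sub_of_hasDerivWithinAt_uIcc
    (hg : ∀ t ∈ [[x₀, x]], HasDerivWithinAt g (g' t) [[x₀, x]] t)
    (hg' : IntervalIntegrable g' volume x₀ x) :
    ∫ t in x₀..x, g' t = g x - g x₀ :=
  integral_eq_sub_of_hasDeriv_right (fun t ht ↦ (hg t ht).continuousWithinAt)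
    (fun t ht ↦ (hg t (mem_Icc_of_Ioo ht) |>.hasDerivAt (Icc_mem_nhds ht.1 ht.2)).hasDerivWithinAt)
    hg'

theorem momentIntegral_zero
    (hg : ∀ t ∈ [[x₀, x]], HasDerivWithinAt g (g' t) [[x₀, x]] t)
    (hg' : IntervalIntegrable g' volume x₀ x) :
    momentIntegral x₀ 0 g' x = g x - g x₀ := by
  simpa [momentIntegral] using integral_eq_sub_of_hasDerivWithinAt_uIcc hg hg'

theorem momentIntegral_succ (k : ℕ)
    (hg : ∀ t ∈ [[x₀, x]], HasDerivWithinAt g (g' t) [[x₀, x]] t)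
    (hg' : IntervalIntegrable g' volume x₀ x) :
    momentIntegral x₀ (k + 1) g' x
      = (x - x₀) ^ (k + 1) * g x - (k + 1) * momentIntegral x₀ k g x := by
  have hpow_int : IntervalIntegrable (fun t ↦ (k + 1) * (t - x₀) ^ k) volume x₀ x :=
    (by fun_prop : Continuous fun t : ℝ ↦ (k + 1) * (t - x₀) ^ k).intervalIntegrable _ _
  rw [momentIntegral, integral_mul_deriv_eq_deriv_mul_of_hasDerivWithinAt
    (fun t _ ↦ hasDerivWithinAt_sub_pow_succ x₀ k _ t) hg hpow_int hg',
    momentIntegral, ← intervalIntegral.integral_const_mul]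
  simp only [sub_self, zero_pow k.succ_ne_zero, zero_mul, sub_zero, mul_assoc]

end Interval

theorem hasDerivWithinAt_momentIntegral_div {g : ℝ → ℝ} {a b x₀ x : ℝ} (k : ℕ)
    (hg : ContinuousOn g (Icc a b)) (hx₀ : x₀ ∈ Icc a b) (hx : x ∈ Icc a b) (hne : x ≠ x₀) :
    HasDerivWithinAt (fun y ↦ momentIntegral x₀ k g y / (y - x₀) ^ (k + 1))
      (((x - x₀) ^ (k + 1) * g x - (k + 1) * momentIntegral x₀ k g x) / (x - x₀) ^ (k + 2))
      (Icc a b) x := by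
  have : Fact (x ∈ Icc a b) := ⟨hx⟩
  have hcont : ContinuousOn (fun t ↦ (t - x₀) ^ k * g t) (Icc a b) :=
    (continuous_id.sub continuous_const |>.pow k).continuousOn.mul hg
  have hI : HasDerivWithinAt (momentIntegral x₀ k g) ((x - x₀) ^ k * g x) (Icc a b) x :=
    integral_hasDerivWithinAt_right (hcont.mono (uIcc_subset_Icc hx₀ hx)).intervalIntegrable
      ⟨Icc a b, self_mem_nhdsWithin, hcont.aestronglyMeasurable measurableSet_Icc⟩
      (hcont.continuousWithinAt hx)
  have hne' : x - x₀ ≠ 0 := sub_ne_zero.2 hne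
  refine (hI.fun_div (hasDerivWithinAt_sub_pow_succ x₀ k _ x) (pow_ne_zero _ hne')).congr_deriv ?_
  rw [div_eq_div_iff (pow_ne_zero _ (pow_ne_zero _ hne')) (pow_ne_zero _ hne')]
  ring

theorem ContDiffOn.hasDerivWithinAt_iteratedDerivWithin {𝕜 F : Type*} [NontriviallyNormedField 𝕜]
    [NormedAddCommGroup F] [NormedSpace 𝕜 F] {f : 𝕜 → F} {s : Set 𝕜} {n : ℕ∞ω} {m : ℕ}
    (hf : ContDiffOn 𝕜 n f s) (hmn : m < n) (hs : UniqueDiffOn 𝕜 s) {x : 𝕜} (hx : x ∈ s) :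
    HasDerivWithinAt (iteratedDerivWithin m f s) (iteratedDerivWithin (m + 1) f s x) s x := by
  rw [iteratedDerivWithin_succ]
  exact (hf.differentiableOn_iteratedDerivWithin hmn hs x hx).hasDerivWithinAt

section Icc

variable {f : ℝ → ℝ} {a b x₀ x : ℝ} {n : ℕ∞ω} {m : ℕ}

theorem ContDiffOn.hasDerivWithinAt_iteratedDerivWithin_uIcc (hf : ContDiffOn ℝ n f (Icc a b))
    (hab : a < b) (hmn : m < n) (hx₀ : x₀ ∈ Icc a b) (hx : x ∈ Icc a b) :
    ∀ t ∈ [[x₀, x]], HasDerivWithinAt (iteratedDerivWithin m f (Icc a b))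
      (iteratedDerivWithin (m + 1) f (Icc a b) t) [[x₀, x]] t := fun _ ht ↦
  (hf.hasDerivWithinAt_iteratedDerivWithin hmn (uniqueDiffOn_Icc hab)
    (uIcc_subset_Icc hx₀ hx ht)).mono (uIcc_subset_Icc hx₀ hx)

theorem ContDiffOn.intervalIntegrable_iteratedDerivWithin (hf : ContDiffOn ℝ n f (Icc a b))
    (hab : a < b) (hmn : m ≤ n) (hx₀ : x₀ ∈ Icc a b) (hx : x ∈ Icc a b) :
    IntervalIntegrable (iteratedDerivWithin m f (Icc a b)) volume x₀ x :=
  ((hf.continuousOn_iteratedDerivWithin hmn (uniqueDiffOn_Icc hab)).mono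
    (uIcc_subset_Icc hx₀ hx)).intervalIntegrable

theorem iteratedDerivWithin_div_sub_eq_momentIntegral (hab : a < b) (hx₀ : x₀ ∈ Icc a b)
    (hf0 : f x₀ = 0) (k : ℕ) (hf : ContDiffOn ℝ (k + 1) f (Icc a b)) (hx : x ∈ Icc a b)
    (hne : x ≠ x₀) :
    iteratedDerivWithin k (fun y ↦ f y / (y - x₀)) (Icc a b) x
      = momentIntegral x₀ k (iteratedDerivWithin (k + 1) f (Icc a b)) x / (x - x₀) ^ (k + 1) := by
  induction k generalizing x with
  | zero =>
    rw [momentIntegral_zero (hf.hasDerivWithinAt_iteratedDerivWithin_uIcc hab (by simp) hx₀ hx)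
      (hf.intervalIntegrable_iteratedDerivWithin hab le_rfl hx₀ hx)]
    simp [hf0]
  | succ k ih =>
    have hf' : ContDiffOn ℝ (k + 1) f (Icc a b) := hf.of_le (by norm_cast; omega)
    have heq : iteratedDerivWithin k (fun y ↦ f y / (y - x₀)) (Icc a b) =ᶠ[𝓝[Icc a b] x]
        fun y ↦ momentIntegral x₀ k (iteratedDerivWithin (k + 1) f (Icc a b)) y
          / (y - x₀) ^ (k + 1) := by
      filter_upwards [self_mem_nhdsWithin,
        eventually_nhdsWithin_of_eventually_nhds (eventually_ne_nhds hne)] with y hy hyne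
      exact ih hf' hy hyne
    have hderiv := hasDerivWithinAt_momentIntegral_div k
      (hf'.continuousOn_iteratedDerivWithin le_rfl (uniqueDiffOn_Icc hab)) hx₀ hx hne
    rw [iteratedDerivWithin_succ, heq.derivWithin_eq (ih hf' hx hne),
      hderiv.derivWithin (uniqueDiffOn_Icc hab x hx),
      momentIntegral_succ k
        (hf.hasDerivWithinAt_iteratedDerivWithin_uIcc hab (by norm_cast; omega) hx₀ hx)
        (hf.intervalIntegrable_iteratedDerivWithin hab le_rfl hx₀ hx)]

end Icc

theorem stmt_0 (a b x₀ : ℝ) (k : ℕ) (f : ℝ → ℝ)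
    (hx₀ : x₀ ∈ Icc a b)
    (hf : ContDiffOn ℝ (k + 1) f (Icc a b))
    (hf0 : f x₀ = 0) :
    ∀ x ∈ Icc a b, x ≠ x₀ →
      iteratedDerivWithin k (fun y => f y / (y - x₀)) (Icc a b) x
        = (∫ t in x₀..x, (t - x₀) ^ k * iteratedDerivWithin (k + 1) f (Icc a b) t)
            / (x - x₀) ^ (k + 1) := by
  intro x hx hne
  have hab : a < b := by
    by_contra! hba
    exact hne (subsingleton_Icc_of_ge hba hx hx₀)
  exact iteratedDerivWithin_div_sub_eq_momentIntegral hab hx₀ hf0 k hf hx hne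
end

section
/- Let f : [a,b] → ℝ be C^{k+1} with f(x₀) = 0 for some x₀ ∈ [a,b]. Then for all x ∈ [a,b] with x ≠ x₀, the k-th derivative of x ↦ f(x)/(x-x₀) is bounded in absolute value by the sup norm of f^{(k+1)} on [a,b]. -/
/-!
For `x ≠ x₀`, differentiating the Taylor polynomial of `f` in its centre gives, by induction on `n`,
`(f y / (y - x₀))⁽ⁿ⁾(x) = -n! T_n(x₀) / (x₀ - x)^(n+1)`, where `T_n` is the degree `n` Taylor
polynomial of `f` centred at `x`. As `f x₀ = 0`, `T_n(x₀)` is minus the Lagrange remainder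
`f⁽ⁿ⁺¹⁾(ξ) (x₀ - x)^(n+1) / (n+1)!`, so the `n`-th derivative equals `f⁽ⁿ⁺¹⁾(ξ) / (n+1)` for
some `ξ` between `x` and `x₀`.
-/

open Set
open scoped Nat Topology

theorem iteratedDerivWithin_eq_of_subset {𝕜 F : Type*} [NontriviallyNormedField 𝕜]
    [NormedAddCommGroup F] [NormedSpace 𝕜 F] {f : 𝕜 → F} {s t : Set 𝕜} {x : 𝕜} {n : ℕ}
    (st : s ⊆ t) (hs : UniqueDiffOn 𝕜 s) (ht : UniqueDiffOn 𝕜 t) (hf : ContDiffOn 𝕜 n f t)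
    (hx : x ∈ s) :
    iteratedDerivWithin n f s x = iteratedDerivWithin n f t x := by
  simp only [iteratedDerivWithin_eq_iteratedFDerivWithin,
    iteratedFDerivWithin_subset st hs ht hf hx]

theorem taylor_mean_remainder_lagrange_of_subset {f : ℝ → ℝ} {s : Set ℝ} {x x₀ : ℝ} {n : ℕ}
    (hx : x₀ ≠ x) (hs : UniqueDiffOn ℝ s) (hsub : uIcc x₀ x ⊆ s)
    (hf : ContDiffOn ℝ (n + 1) f s) :
    ∃ x' ∈ uIoo x₀ x, f x - taylorWithinEval f n s x₀ x =
      iteratedDerivWithin (n + 1) f s x' * (x - x₀) ^ (n + 1) / (n + 1)! := by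
  have hu : UniqueDiffOn ℝ (uIcc x₀ x) := uniqueDiffOn_uIcc hx
  have hfu : ContDiffOn ℝ (n + 1) f (uIcc x₀ x) := hf.mono hsub
  obtain ⟨x', hx', h⟩ := taylor_mean_remainder_lagrange hx hfu.of_succ
    ((hfu.differentiableOn_iteratedDerivWithin (by norm_cast; omega) hu).mono
      Ioo_subset_Icc_self)
  refine ⟨x', hx', ?_⟩
  have htaylor : taylorWithinEval f n (uIcc x₀ x) x₀ x = taylorWithinEval f n s x₀ x := by
    simp only [taylor_within_apply]
    refine Finset.sum_congr rfl fun j hj => ?_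
    rw [iteratedDerivWithin_eq_of_subset hsub hu hs (hf.of_le (by norm_cast; grind))
      left_mem_uIcc]
  rwa [← htaylor, ← iteratedDerivWithin_eq_of_subset hsub hu hs hf
    (Ioo_subset_Icc_self hx')]

theorem iteratedDerivWithin_div_sub_eq_taylorWithinEval {f : ℝ → ℝ} {s : Set ℝ} {x₀ : ℝ}
    (hs : UniqueDiffOn ℝ s) {n : ℕ} (hf : ContDiffOn ℝ n f s) {x : ℝ} (hx : x ∈ s)
    (hne : x ≠ x₀) :
    iteratedDerivWithin n (fun y => f y / (y - x₀)) s x =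
      -(n ! * taylorWithinEval f n s x x₀) / (x₀ - x) ^ (n + 1) := by
  induction n generalizing x with
  | zero =>
    simp only [iteratedDerivWithin_zero, taylor_within_zero_eval, Nat.factorial_zero,
      Nat.cast_one, one_mul, zero_add, pow_one]
    rw [neg_div, ← div_neg, neg_sub]
  | succ n ih =>
    have hev : iteratedDerivWithin n (fun y => f y / (y - x₀)) s =ᶠ[𝓝[s] x]
        fun y => -(n ! * taylorWithinEval f n s y x₀) / (x₀ - y) ^ (n + 1) := by
      filter_upwards [self_mem_nhdsWithin, mem_nhdsWithin_of_mem_nhds (isOpen_ne.mem_nhds hne)]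
        with y hy hy' using ih hf.of_succ hy hy'
    have hT : HasDerivWithinAt (fun y => taylorWithinEval f n s y x₀)
        (((n ! : ℝ)⁻¹ * (x₀ - x) ^ n) • iteratedDerivWithin (n + 1) f s x) s x :=
      hasDerivWithinAt_taylorWithinEval hs self_mem_nhdsWithin hx subset_rfl hf.of_succ
        (hf.differentiableOn_iteratedDerivWithin (by norm_cast; omega) hs x hx)
    have hsub : x₀ - x ≠ 0 := sub_ne_zero.2 hne.symm
    have hF := ((hT.const_mul (n ! : ℝ)).fun_neg).fun_div
      (monomial_has_deriv_aux x x₀ n).hasDerivWithinAt (pow_ne_zero (n + 1) hsub)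
    rw [iteratedDerivWithin_succ, hev.derivWithin_eq (ih hf.of_succ hx hne),
      hF.derivWithin (hs x hx), taylorWithinEval_succ, smul_eq_mul, smul_eq_mul,
      Nat.factorial_succ]
    push_cast
    field_simp
    ring

theorem exists_iteratedDerivWithin_div_sub_eq {f : ℝ → ℝ} {s : Set ℝ} {x₀ x : ℝ} {n : ℕ}
    (hs : UniqueDiffOn ℝ s) (hf : ContDiffOn ℝ (n + 1) f s) (hf0 : f x₀ = 0)
    (hsub : uIcc x x₀ ⊆ s) (hne : x ≠ x₀) :
    ∃ ξ ∈ uIoo x x₀, iteratedDerivWithin n (fun y => f y / (y - x₀)) s x =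
      iteratedDerivWithin (n + 1) f s ξ / (n + 1) := by
  obtain ⟨ξ, hξ, hrem⟩ := taylor_mean_remainder_lagrange_of_subset hne hs hsub hf
  refine ⟨ξ, hξ, ?_⟩
  have htaylor : taylorWithinEval f n s x x₀ =
      -(iteratedDerivWithin (n + 1) f s ξ * (x₀ - x) ^ (n + 1) / (n + 1)!) := by
    rw [hf0] at hrem
    linarith
  have hx₀x : x₀ - x ≠ 0 := sub_ne_zero.2 hne.symm
  rw [iteratedDerivWithin_div_sub_eq_taylorWithinEval hs hf.of_succ (hsub left_mem_uIcc) hne,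
    htaylor, Nat.factorial_succ]
  push_cast
  field_simp

theorem stmt_1 (a b x₀ : ℝ) (k : ℕ) (f : ℝ → ℝ)
    (hx₀ : x₀ ∈ Icc a b)
    (hf : ContDiffOn ℝ (k + 1) f (Icc a b))
    (hf0 : f x₀ = 0) :
    ∀ x ∈ Icc a b, x ≠ x₀ →
      |iteratedDerivWithin k (fun y => f y / (y - x₀)) (Icc a b) x|
        ≤ sSup ((fun t => |iteratedDerivWithin (k + 1) f (Icc a b) t|) '' Icc a b) := by
  intro x hx hne
  have hab : a < b := by
    rcases hne.lt_or_gt with h | h <;> linarith [hx.1, hx.2, hx₀.1, hx₀.2]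
  have hs : UniqueDiffOn ℝ (Icc a b) := uniqueDiffOn_Icc hab
  have hsub : uIcc x x₀ ⊆ Icc a b := uIcc_subset_Icc hx hx₀
  obtain ⟨ξ, hξ, heq⟩ := exists_iteratedDerivWithin_div_sub_eq hs hf hf0 hsub hne
  have hbdd : BddAbove ((fun t => |iteratedDerivWithin (k + 1) f (Icc a b) t|) '' Icc a b) :=
    (isCompact_Icc.image_of_continuousOn
      (hf.continuousOn_iteratedDerivWithin le_rfl hs).abs).bddAbove
  calc |iteratedDerivWithin k (fun y => f y / (y - x₀)) (Icc a b) x|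
      = |iteratedDerivWithin (k + 1) f (Icc a b) ξ| / (k + 1) := by
        rw [heq, abs_div, abs_of_pos (by positivity : (0 : ℝ) < k + 1)]
    _ ≤ |iteratedDerivWithin (k + 1) f (Icc a b) ξ| :=
        div_le_self (abs_nonneg _) (by linarith [(Nat.cast_nonneg k : (0 : ℝ) ≤ k)])
    _ ≤ _ := le_csSup hbdd (mem_image_of_mem _ (hsub (Ioo_subset_Icc_self hξ)))
end

section
/- Let ℓ₁, …, ℓₙ be positive reals incommensurable over {−1,0,1}, let L = Σℓⱼ, and let T = {|ℓ·ζ| : ζ ∈ {1}×{±1}^{n−1}}. Then max T = L, and if ℓ'₁ denotes the smallest of the ℓⱼ, then max(T \ {L}) = L − 2ℓ'₁; equivalently ℓ'₁ = (L − max(T \ {L}))/2. -/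
/-
Every term `|ℓ·ζ|` is at most `∑ |ζⱼ ℓⱼ| = L`, with equality for `ζ = 1`. If `ζ ≠ ±1`, then `ζ`
has entries `1` and `-1`, so both `ℓ·ζ` and `-ℓ·ζ` miss `L` by at least twice one of the lengths,
hence by at least `2ℓ'₁`; flipping only the sign of `ℓ'₁` attains `L - 2ℓ'₁`, which lies in `T` since
`T` is unchanged by `ζ ↦ -ζ`.
-/

open Finset

/-- `ℓ₁,…,ℓₙ` incommensurable over `{-1,0,1}`. -/
def Incommensurable {n : ℕ} (ℓ : Fin n → ℝ) : Prop :=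
  ∀ ζ : Fin n → ℝ, (∀ j, ζ j = -1 ∨ ζ j = 0 ∨ ζ j = 1) →
    (∑ j, ζ j * ℓ j) = 0 → ζ = 0

section SignVector

variable {ι : Type*} {ζ : ι → ℝ}

def IsSignVector (ζ : ι → ℝ) : Prop := ∀ j, ζ j = 1 ∨ ζ j = -1

lemma isSignVector_one : IsSignVector (1 : ι → ℝ) := fun _ => Or.inl rfl

lemma isSignVector_update_one [DecidableEq ι] (k : ι) :
    IsSignVector (Function.update (1 : ι → ℝ) k (-1)) := by
  intro j
  by_cases h : j = k
  · subst h; simp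
  · simp [h]

lemma IsSignVector.neg (hζ : IsSignVector ζ) : IsSignVector (-ζ) := fun j => by
  rcases hζ j with h | h <;> simp [h]

lemma IsSignVector.eq_one_of_forall_ne (hζ : IsSignVector ζ) (h : ∀ j, ζ j ≠ -1) : ζ = 1 :=
  funext fun j => (hζ j).resolve_right (h j)

lemma IsSignVector.abs_mul (hζ : IsSignVector ζ) (j : ι) (x : ℝ) : |ζ j * x| = |x| := by
  rcases hζ j with h | h <;> simp [h]

variable [Fintype ι] {ℓ : ι → ℝ}

lemma sum_neg_mul_eq_neg (ζ ℓ : ι → ℝ) : ∑ j, (-ζ) j * ℓ j = -∑ j, ζ j * ℓ j := by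
  simp [sum_neg_distrib]

lemma IsSignVector.abs_sum_mul_le (hζ : IsSignVector ζ) (hℓ : ∀ j, 0 ≤ ℓ j) :
    |∑ j, ζ j * ℓ j| ≤ ∑ j, ℓ j :=
  calc |∑ j, ζ j * ℓ j| ≤ ∑ j, |ζ j * ℓ j| := abs_sum_le_sum_abs _ _
    _ = ∑ j, ℓ j := sum_congr rfl fun j _ => by rw [hζ.abs_mul, abs_of_nonneg (hℓ j)]

lemma IsSignVector.sum_mul_le_of_eq_neg_one (hζ : IsSignVector ζ) (hℓ : ∀ j, 0 ≤ ℓ j) {k : ι}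
    (hk : ζ k = -1) : ∑ j, ζ j * ℓ j ≤ ∑ j, ℓ j - 2 * ℓ k := by
  classical
  have hrest : ∑ j ∈ univ.erase k, ζ j * ℓ j ≤ ∑ j ∈ univ.erase k, ℓ j :=
    sum_le_sum fun j _ => by rcases hζ j with h | h <;> simp only [h] <;> linarith [hℓ j]
  rw [← add_sum_erase _ _ (mem_univ k), ← add_sum_erase _ _ (mem_univ k), hk]
  linarith

lemma IsSignVector.abs_sum_mul_le_of_mixed (hζ : IsSignVector ζ) (hℓ : ∀ j, 0 ≤ ℓ j)
    {j₀ k k' : ι} (hmin : ∀ j, ℓ j₀ ≤ ℓ j) (hk : ζ k = -1) (hk' : ζ k' = 1) :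
    |∑ j, ζ j * ℓ j| ≤ ∑ j, ℓ j - 2 * ℓ j₀ := by
  have hpos := hζ.sum_mul_le_of_eq_neg_one hℓ hk
  have hneg := hζ.neg.sum_mul_le_of_eq_neg_one hℓ (k := k') (by simp [hk'])
  rw [sum_neg_mul_eq_neg] at hneg
  rw [abs_le']
  constructor <;> linarith [hmin k, hmin k']

lemma IsSignVector.exists_eq_one_abs_sum_mul_eq (hζ : IsSignVector ζ) (i : ι) :
    ∃ ξ, IsSignVector ξ ∧ ξ i = 1 ∧ |∑ j, ζ j * ℓ j| = |∑ j, ξ j * ℓ j| := by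
  rcases hζ i with h | h
  · exact ⟨ζ, hζ, h, rfl⟩
  · exact ⟨-ζ, hζ.neg, by simp [h], by rw [sum_neg_mul_eq_neg, abs_neg]⟩

lemma sum_update_one_mul [DecidableEq ι] (ℓ : ι → ℝ) (k : ι) :
    ∑ j, Function.update (1 : ι → ℝ) k (-1) j * ℓ j = ∑ j, ℓ j - 2 * ℓ k := by
  rw [← add_sum_erase _ _ (mem_univ k), ← add_sum_erase _ _ (mem_univ k),
    sum_congr rfl fun j hj => by
      rw [Function.update_of_ne (ne_of_mem_erase hj), Pi.one_apply, one_mul]]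
  simp only [Function.update_self]
  ring

end SignVector

lemma two_mul_le_sum_of_ne {ι : Type*} [Fintype ι] {ℓ : ι → ℝ} (hℓ : ∀ j, 0 ≤ ℓ j) {j₀ i : ι}
    (hmin : ∀ j, ℓ j₀ ≤ ℓ j) (hi : i ≠ j₀) : 2 * ℓ j₀ ≤ ∑ j, ℓ j := by
  classical
  have := sum_le_sum_of_subset_of_nonneg (subset_univ {i, j₀}) fun j _ _ => hℓ j
  rw [sum_pair hi] at this
  linarith [hmin i]

theorem stmt_12 (n : ℕ) (hn : 2 ≤ n) (ℓ : Fin n → ℝ)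
    (hpos : ∀ j, 0 < ℓ j)
    (L : ℝ) (hL : L = ∑ j, ℓ j)
    (T : Set ℝ)
    (hT : T = {t : ℝ | ∃ ζ : Fin n → ℝ,
      (∀ j, ζ j = 1 ∨ ζ j = -1) ∧ ζ ⟨0, by omega⟩ = 1 ∧ t = |∑ j, ζ j * ℓ j|})
    (j₀ : Fin n) (hj₀ : ∀ j, ℓ j₀ ≤ ℓ j) :
    (L ∈ T ∧ ∀ t ∈ T, t ≤ L) ∧
    ((L - 2 * ℓ j₀) ∈ T \ {L} ∧ ∀ t ∈ T \ {L}, t ≤ L - 2 * ℓ j₀) := by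
  subst hL hT
  have hℓ : ∀ j, 0 ≤ ℓ j := fun j => (hpos j).le
  have hmem (ζ : Fin n → ℝ) (hζ : IsSignVector ζ) :
      |∑ j, ζ j * ℓ j| ∈ {t : ℝ | ∃ ζ : Fin n → ℝ,
        (∀ j, ζ j = 1 ∨ ζ j = -1) ∧ ζ ⟨0, by omega⟩ = 1 ∧ t = |∑ j, ζ j * ℓ j|} :=
    hζ.exists_eq_one_abs_sum_mul_eq _
  have hsum_one : |∑ j, (1 : Fin n → ℝ) j * ℓ j| = ∑ j, ℓ j := by
    simpa using abs_of_nonneg (sum_nonneg fun j _ => hℓ j)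
  have : Nontrivial (Fin n) := Fin.nontrivial_iff_two_le.mpr hn
  obtain ⟨i, hi⟩ := exists_ne j₀
  refine ⟨⟨hsum_one ▸ hmem 1 isSignVector_one, ?_⟩, ⟨⟨?_, ?_⟩, ?_⟩⟩
  · rintro t ⟨ζ, hζ, -, rfl⟩
    exact IsSignVector.abs_sum_mul_le hζ hℓ
  · have h := hmem _ (isSignVector_update_one j₀)
    rwa [sum_update_one_mul, abs_of_nonneg (by linarith [two_mul_le_sum_of_ne hℓ hj₀ hi])] at h
  · simpa using (hpos j₀).ne'
  · rintro t ⟨⟨ζ, hζ, hζ₀, rfl⟩, htL⟩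
    obtain ⟨k, hk⟩ : ∃ k, ζ k = -1 := by
      by_contra! h
      exact htL (by rw [IsSignVector.eq_one_of_forall_ne hζ h, hsum_one]; rfl)
    exact IsSignVector.abs_sum_mul_le_of_mixed hζ hℓ hj₀ hk hζ₀
end

section
/- There exist two non-congruent Euclidean triangles with perimeter 1, both with all angles of the form π/(odd integer) or complementary, having equal characteristic functions: namely, triangles with angles (π/7, π/63, 53π/63) and (π/9, π/21, 53π/63) satisfy (−1)^{i₁+i₂}(i₁+i₂+1)/(4i₁i₂−1) = (−1)^{ĩ₁+ĩ₂}(ĩ₁+ĩ₂+1)/(4ĩ₁ĩ₂−1) with (i₁,i₂,ĩ₁,ĩ₂) = (3,31,4,10). -/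
/-!
Since `(-1)^k = ±1` and `sin` is odd, `(-1)^k * sin (2π a / b) = sin (2π ρ)` with
`ρ = (-1)^k a / b`, so the constant term of the characteristic polynomial depends only on the
signed ratio `ρ`. For `(i₁, i₂) = (3, 31)` and `(4, 10)` both ratios equal `5/53`, while `π/7` is
an angle of the first triangle but not of the second.
-/

open Real

lemma neg_one_pow_mul_sin (k : ℕ) (x : ℝ) : (-1 : ℝ) ^ k * sin x = sin ((-1) ^ k * x) := by
  rcases neg_one_pow_eq_or ℝ k with h | h <;> simp [h]

lemma neg_one_pow_mul_sin_two_pi_mul_div (k : ℕ) (a b : ℝ) :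
    (-1 : ℝ) ^ k * sin (2 * π * a / b) = sin (2 * π * ((-1) ^ k * a / b)) := by
  rw [neg_one_pow_mul_sin]
  ring_nf

/-- Two non-congruent triangles with perimeter 1, angles `(π/7, π/63, 53π/63)` and
`(π/9, π/21, 53π/63)` (coming from `(i₁,i₂,j₁,j₂) = (3,31,4,10)`), have equal characteristic
functions since the arithmetic identity
`(−1)^{i₁+i₂}(i₁+i₂+1)/(4i₁i₂−1) = (−1)^{j₁+j₂}(j₁+j₂+1)/(4j₁j₂−1)` holds. -/
theorem stmt_14 :
    ∃ i₁ i₂ j₁ j₂ : ℕ, (i₁, i₂, j₁, j₂) = (3, 31, 4, 10) ∧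
    -- the triangles are not congruent: the angle triples differ
    ({Real.pi / (2 * i₁ + 1), Real.pi / (2 * i₂ + 1),
        Real.pi - Real.pi / (2 * i₁ + 1) - Real.pi / (2 * i₂ + 1)} : Set ℝ)
      ≠ ({Real.pi / (2 * j₁ + 1), Real.pi / (2 * j₂ + 1),
        Real.pi - Real.pi / (2 * j₁ + 1) - Real.pi / (2 * j₂ + 1)} : Set ℝ) ∧
    -- the arithmetic identity making the characteristic functions equal
    ((-1 : ℝ) ^ (i₁ + i₂) * ((i₁ + i₂ + 1 : ℕ) : ℝ) / ((4 * i₁ * i₂ - 1 : ℕ) : ℝ)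
      = (-1 : ℝ) ^ (j₁ + j₂) * ((j₁ + j₂ + 1 : ℕ) : ℝ) / ((4 * j₁ * j₂ - 1 : ℕ) : ℝ)) ∧
    -- hence the characteristic polynomials coincide
    (∀ σ : ℝ,
      Real.cos σ + (-1 : ℝ) ^ (i₁ + i₂)
          * Real.sin (2 * Real.pi * ((i₁ + i₂ + 1 : ℕ) : ℝ) / ((4 * i₁ * i₂ - 1 : ℕ) : ℝ))
        = Real.cos σ + (-1 : ℝ) ^ (j₁ + j₂)
          * Real.sin (2 * Real.pi * ((j₁ + j₂ + 1 : ℕ) : ℝ) / ((4 * j₁ * j₂ - 1 : ℕ) : ℝ))) := by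
  have signed_ratio_eq :
      (-1 : ℝ) ^ (3 + 31) * ((3 + 31 + 1 : ℕ) : ℝ) / ((4 * 3 * 31 - 1 : ℕ) : ℝ)
        = (-1 : ℝ) ^ (4 + 10) * ((4 + 10 + 1 : ℕ) : ℝ) / ((4 * 4 * 10 - 1 : ℕ) : ℝ) := by
    norm_num
  refine ⟨3, 31, 4, 10, rfl, ?_, signed_ratio_eq, fun σ => ?_⟩
  · refine ne_of_mem_of_not_mem' (a := π / 7) (by norm_num) ?_
    norm_num
    refine ⟨?_, ?_, ?_⟩ <;> intro h <;> linarith [pi_pos]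
  · rw [neg_one_pow_mul_sin_two_pi_mul_div, neg_one_pow_mul_sin_two_pi_mul_div, signed_ratio_eq]
end
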